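/- arXiv:1603.08404 — 4 statements merged into one kernel-verified Lean document; each statement's English description precedes it below -/
import Mathlib

section
/- Let α be a unital twisted partial action of a group G on a unital ring R. If the partial crossed product R*_{α,w}G is right artinian (respectively right noetherian, semilocal), then R is right artinian (respectively right noetherian, semilocal). -/
/-- A unital twisted partial action of a group `G` on a unital ring `R`
(Dokuchaev–Exel–Simón).  The ideal `D g` is the ideal generated by the central
idempotent `e g`, i.e. `D g = {x | e g * x = x}`;  `act g` is the isomorphism
`α_g : D g⁻¹ → D g` (its values outside `D g⁻¹` are irrelevant) with inverse
`inv g`, and `w g h` is the invertible twisting element of `D g * D (g*h)`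
with inverse `winv g h`. -/
structure UnitalTwistedPartialAction (G : Type) [Group G] (R : Type) [Ring R] where
  e : G → R
  idem : ∀ g, e g * e g = e g
  central : ∀ g r, e g * r = r * e g
  e_one : e 1 = 1
  act : G → R → R
  inv : G → R → R
  w : G → G → R
  winv : G → G → R
  act_mem : ∀ g x, e g⁻¹ * x = x → e g * act g x = act g x
  act_add : ∀ g x y, e g⁻¹ * x = x → e g⁻¹ * y = y →
    act g (x + y) = act g x + act g y
  act_mul : ∀ g x y, e g⁻¹ * x = x → e g⁻¹ * y = y →
    act g (x * y) = act g x * act g y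
  inv_act : ∀ g x, e g⁻¹ * x = x → inv g (act g x) = x
  act_inv : ∀ g x, e g * x = x → act g (inv g x) = x
  act_one : ∀ x, act 1 x = x
  -- α_g(D_{g⁻¹} D_h) = D_g D_{gh}
  act_range : ∀ g h x, e g⁻¹ * x = x → e h * x = x → e (g * h) * act g x = act g x
  act_range' : ∀ g h y, e g * y = y → e (g * h) * y = y →
    ∃ x, e g⁻¹ * x = x ∧ e h * x = x ∧ act g x = y
  w_mem : ∀ g h, e g * w g h = w g h ∧ e (g * h) * w g h = w g h
  w_winv : ∀ g h, w g h * winv g h = e g * e (g * h)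
  winv_w : ∀ g h, winv g h * w g h = e g * e (g * h)
  w_one_left : ∀ g, w 1 g = e g
  w_one_right : ∀ g, w g 1 = e g
  -- α_g ∘ α_h (a) = w_{g,h} α_{gh}(a) w_{g,h}⁻¹  for a ∈ D_{h⁻¹} D_{(gh)⁻¹}
  comp : ∀ g h a, e h⁻¹ * a = a → e (h⁻¹ * g⁻¹) * a = a →
    act g (act h a) = w g h * act (g * h) a * winv g h
  -- the cocycle identity α_g(a w_{h,t}) w_{g,ht} = α_g(a) w_{g,h} w_{gh,t}
  cocycle : ∀ g h t a, e g⁻¹ * a = a → e h * a = a → e (h * t) * a = a →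
    act g (a * w h t) * w g (h * t) = act g a * w g h * w (g * h) t

/-- A realization of the partial crossed product `R *_{α,w} G`:  a ring `A`
together with maps `δ g : D g → A` (written as maps `R → A` that only depend
on the `D g`-component) such that `A = ⊕_{g ∈ G} δ g (D g)` with the crossed
product multiplication `(a δ_g)(b δ_h) = α_g(α_g⁻¹(a) b) w_{g,h} δ_{gh}`. -/
structure IsCrossedProduct {G R : Type} [Group G] [Ring R]
    (pa : UnitalTwistedPartialAction G R) (A : Type) [Ring A]
    (δ : G → R → A) : Prop where
  proj : ∀ g a, δ g a = δ g (pa.e g * a)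
  add : ∀ g a b, δ g (a + b) = δ g a + δ g b
  mul : ∀ g h a b, pa.e g * a = a → pa.e h * b = b →
    δ g a * δ h b = δ (g * h) (pa.act g (pa.inv g a * b) * pa.w g h)
  one : δ 1 1 = 1
  indep : ∀ (s : Finset G) (a : G → R), (∀ g, pa.e g * a g = a g) →
    (∑ g ∈ s, δ g (a g)) = 0 → ∀ g ∈ s, a g = 0
  span : ∀ x : A, ∃ (s : Finset G) (a : G → R),
    (∀ g, pa.e g * a g = a g) ∧ x = ∑ g ∈ s, δ g (a g)

/-- A ring is semilocal if it is semisimple modulo its Jacobson radical. -/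
def IsSemilocalRing (A : Type) [Ring A] : Prop :=
  IsSemisimpleRing (TwoSidedIdeal.jacobson (⊥ : TwoSidedIdeal A)).ringCon.Quotient

/-- A ring is semiprimary if it is semilocal and its Jacobson radical is nilpotent. -/
def IsSemiprimaryRing' (A : Type) [Ring A] : Prop :=
  IsSemilocalRing A ∧ ∃ n : ℕ, 0 < n ∧ ∀ f : Fin n → A,
    (∀ i, f i ∈ TwoSidedIdeal.jacobson (⊥ : TwoSidedIdeal A)) →
      (List.ofFn f).prod = 0

/-- A ring is right artinian iff its opposite ring is (left) artinian. -/
def IsRightArtinianRing (A : Type) [Ring A] : Prop := IsArtinianRing Aᵐᵒᵖ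

/-- A ring is right noetherian iff its opposite ring is (left) noetherian. -/
def IsRightNoetherianRing (A : Type) [Ring A] : Prop := IsNoetherianRing Aᵐᵒᵖ


/-!
Let `ι : R → A`, `r ↦ r δ₁`, and let `π : A → R` take the coefficient of `δ₁`; it is well defined
because the `δ_g (D_g)` are independent. Then `π` is an `R`-bimodule retraction of `ι`. Hence
`I ↦ I A` embeds the lattice of right ideals of `R` into that of `A`, which transfers the chain
conditions, and `ι` reflects units.

So `R → A → A / J(A)` reflects units and lands in a semisimple ring, and `R` is semilocal by the
Camps–Dicks argument for such a map `φ : R → S` with `S` artinian. Choosing `b` with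
`S φ(a - a b a)` minimal makes `a - a b a` quasi-regular, so `R / J(R)` is von Neumann regular.
The descending chain condition in `S` rules out infinite sequences of orthogonal idempotents in
`R / J(R)`. A von Neumann regular ring without such sequences has every left ideal generated by
an idempotent, hence is semisimple.
-/

theorem isUnit_one_sub_mul_comm {R : Type*} [Ring R] {a b : R} :
    IsUnit (1 - a * b) ↔ IsUnit (1 - b * a) := by
  -- Jacobson's lemma, as the statement `1 ∈ σ (a * b) ↔ 1 ∈ σ (b * a)` over `ℤ`
  simpa [spectrum.mem_iff] using
    (spectrum.unit_mem_mul_comm (R := ℤ) (a := a) (b := b) (r := 1)).not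

namespace TwoSidedIdeal

variable {R : Type*} [Ring R]

theorem ringCon_mk'_eq_zero_iff (I : TwoSidedIdeal R) {x : R} :
    I.ringCon.mk' x = 0 ↔ x ∈ I := by
  rw [← mem_ker, ker_ringCon_mk']

theorem exists_mul_one_add_eq_one {j : R} (hj : j ∈ jacobson (⊥ : TwoSidedIdeal R)) :
    ∃ z, z * (1 + j) = 1 := by
  obtain ⟨z, hz⟩ := mem_jacobson_iff.mp hj 1
  rw [mem_bot, mul_one, sub_eq_zero] at hz
  exact ⟨z, by rw [mul_add, mul_one, add_comm, hz]⟩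

theorem isUnit_one_add_of_mem_jacobson {j : R} (hj : j ∈ jacobson (⊥ : TwoSidedIdeal R)) :
    IsUnit (1 + j) := by
  obtain ⟨z, hz⟩ := exists_mul_one_add_eq_one hj
  obtain ⟨z', hz'⟩ := exists_mul_one_add_eq_one (neg_mem _ (mul_mem_left _ z j hj))
  -- `1 - z * j = z`, so `z` has the left inverse `z'` as well as the right inverse `1 + j`
  rw [show 1 + -(z * j) = z by rw [← hz]; noncomm_ring] at hz'
  exact ⟨⟨1 + j, z, left_inv_eq_right_inv hz' hz ▸ hz', hz⟩, rfl⟩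

theorem mem_jacobson_bot_iff {x : R} :
    x ∈ jacobson (⊥ : TwoSidedIdeal R) ↔ ∀ y, IsUnit (1 + y * x) := by
  refine ⟨fun hx y => isUnit_one_add_of_mem_jacobson (mul_mem_left _ y x hx),
    fun h => mem_jacobson_iff.mpr fun y => ⟨↑(h y).unit⁻¹, ?_⟩⟩
  rw [mem_bot, mul_assoc, ← mul_add_one, add_comm (y * x), IsUnit.val_inv_mul, sub_self]

instance isLocalHom_ringCon_mk'_jacobson :
    IsLocalHom (jacobson (⊥ : TwoSidedIdeal R)).ringCon.mk' where
  map_nonunit a ha := by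
    obtain ⟨v, hv⟩ := RingCon.mk'_surjective _ (ha.unit⁻¹).val
    have hva : v * a - 1 ∈ jacobson ⊥ := by
      rw [← ringCon_mk'_eq_zero_iff, map_sub, map_mul, hv, map_one, IsUnit.val_inv_mul, sub_self]
    have hav : a * v - 1 ∈ jacobson ⊥ := by
      rw [← ringCon_mk'_eq_zero_iff, map_sub, map_mul, hv, map_one, IsUnit.mul_val_inv, sub_self]
    obtain ⟨u, hu⟩ := isUnit_one_add_of_mem_jacobson hva
    obtain ⟨u', hu'⟩ := isUnit_one_add_of_mem_jacobson hav
    rw [add_sub_cancel] at hu hu'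
    exact isUnit_iff_exists_and_exists.mpr
      ⟨⟨v * ↑u'⁻¹, by rw [← mul_assoc, ← hu', u'.mul_inv]⟩,
        ⟨↑u⁻¹ * v, by rw [mul_assoc, ← hu, u.inv_mul]⟩⟩

end TwoSidedIdeal

section Idempotent

variable {Q : Type*} [Ring Q] {e f : Q}

theorem IsIdempotentElem.mul_add_sub_mul (he : IsIdempotentElem e) (f : Q) :
    e * (e + f - e * f) = e := by
  rw [mul_sub, mul_add, ← mul_assoc, he.eq, add_sub_cancel_right]

theorem IsIdempotentElem.mul_add_sub_mul_of_mul_eq_zero (hf : IsIdempotentElem f)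
    (hfe : f * e = 0) : f * (e + f - e * f) = f := by
  rw [mul_sub, mul_add, ← mul_assoc, hfe, hf.eq, zero_mul, zero_add, sub_zero]

theorem IsIdempotentElem.add_sub_mul_of_mul_eq_zero (he : IsIdempotentElem e)
    (hf : IsIdempotentElem f) (hfe : f * e = 0) : IsIdempotentElem (e + f - e * f) := by
  rw [IsIdempotentElem, sub_mul, add_mul, mul_assoc e f, hf.mul_add_sub_mul_of_mul_eq_zero hfe,
    he.mul_add_sub_mul]

end Idempotent

namespace Ideal

variable {Q : Type*} [Ring Q] {e f : Q}

theorem mem_span_singleton_iff_mul_eq (he : IsIdempotentElem e) {x : Q} :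
    x ∈ span {e} ↔ x * e = x :=
  ⟨fun hx => by obtain ⟨a, rfl⟩ := mem_span_singleton'.mp hx; rw [mul_assoc, he.eq],
    fun hx => mem_span_singleton'.mpr ⟨x, hx⟩⟩

theorem span_singleton_le_iff_mul_eq (hf : IsIdempotentElem f) :
    span {e} ≤ span {f} ↔ e * f = e := by
  rw [span_singleton_le_iff_mem _, mem_span_singleton_iff_mul_eq hf]

theorem isComplemented_span_singleton (he : IsIdempotentElem e) :
    IsComplemented (span {e}) := by
  rw [span, LinearMap.span_singleton_eq_range]
  exact ⟨_, LinearMap.IsIdempotentElem.isCompl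
    (LinearMap.toSpanSingleton_isIdempotentElem_iff.mpr he)⟩

theorem exists_isIdempotentElem_span_singleton_eq {a b : Q} (hab : a * b * a = a) :
    ∃ e, IsIdempotentElem e ∧ span {a} = span {e} := by
  refine ⟨b * a, by rw [IsIdempotentElem, mul_assoc, ← mul_assoc a, hab], le_antisymm ?_ ?_⟩
  · exact (span_singleton_le_iff_mem _).mpr
      (mem_span_singleton'.mpr ⟨a, by rw [← mul_assoc, hab]⟩)
  · exact (span_singleton_le_iff_mem _).mpr (mul_mem_left _ b (mem_span_singleton_self a))

theorem span_sup_span_of_mul_eq_zero (he : IsIdempotentElem e) (hf : IsIdempotentElem f)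
    (hfe : f * e = 0) : span {e} ⊔ span {f} = span {e + f - e * f} := by
  refine le_antisymm (sup_le ?_ ?_) ((span_singleton_le_iff_mem _).mpr ?_)
  · exact (span_singleton_le_iff_mem _).mpr (mem_span_singleton'.mpr ⟨e, he.mul_add_sub_mul f⟩)
  · exact (span_singleton_le_iff_mem _).mpr
      (mem_span_singleton'.mpr ⟨f, hf.mul_add_sub_mul_of_mul_eq_zero hfe⟩)
  · rw [show e + f - e * f = e + (1 - e) * f by noncomm_ring]
    exact add_mem (Submodule.mem_sup_left (mem_span_singleton_self e))
      (Submodule.mem_sup_right (mul_mem_left _ _ (mem_span_singleton_self f)))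

theorem wellFoundedOn_span_isIdempotentElem
    (hfin : ∀ f : ℕ → Q, (∀ n, IsIdempotentElem (f n)) → (∀ i j, i < j → f i * f j = 0) →
      ∃ n, f n = 0) :
    {I : Ideal Q | ∃ e, IsIdempotentElem e ∧ I = span {e}}.WellFoundedOn (· > ·) := by
  rw [Set.wellFoundedOn_iff_no_descending_seq]
  intro I hI
  choose e he hIe using hI
  have hmul : ∀ i j, i ≤ j → e i * e j = e i := fun i j hij => by
    rw [← span_singleton_le_iff_mul_eq (he j), ← hIe, ← hIe]
    rcases hij.eq_or_lt with rfl | hlt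
    · rfl
    · exact (I.map_rel_iff.mpr hlt).le
  -- the strictly increasing chain `span {e n}` yields the orthogonal idempotents `f n`
  set f : ℕ → Q := fun n => e (n + 1) - e (n + 1) * e n
  have hf_mul : ∀ n y, e (n + 1) * y = e (n + 1) → e n * y = e n → f n * y = f n :=
    fun n y h₁ h₀ => by simp only [f]; rw [sub_mul, mul_assoc, h₀, h₁]
  have hf_mul_self : ∀ n, f n * e n = 0 := fun n => by
    simp only [f]; rw [sub_mul, mul_assoc, (he n).eq, sub_self]
  obtain ⟨n, hn⟩ := hfin f
    (fun n => by
      rw [IsIdempotentElem, mul_sub, ← mul_assoc,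
        hf_mul n _ (he _).eq (hmul n (n + 1) n.le_succ), hf_mul_self, sub_zero])
    (fun i j hij => by
      rw [mul_sub, ← mul_assoc, hf_mul i _ (hmul _ _ (by omega)) (hmul _ _ (by omega)),
        hf_mul i _ (hmul _ _ hij) (hmul _ _ hij.le), sub_self])
  have hle : I (n + 1) ≤ I n := by
    rw [hIe, hIe, span_singleton_le_iff_mul_eq (he n)]
    exact (sub_eq_zero.mp hn).symm
  exact (I.map_rel_iff.mpr n.lt_succ_self).not_ge hle

theorem exists_isIdempotentElem_eq_span (hreg : ∀ a : Q, ∃ b, a * b * a = a)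
    (hwf : {I : Ideal Q | ∃ e, IsIdempotentElem e ∧ I = span {e}}.WellFoundedOn (· > ·))
    (I : Ideal Q) : ∃ e, IsIdempotentElem e ∧ I = span {e} := by
  obtain ⟨_, ⟨⟨e, he, rfl⟩, heI⟩, hmax⟩ :=
    (hwf.subset (Set.inter_subset_left (t := Set.Iic I))).exists_maximal
      ⟨⊥, ⟨0, .zero, by simp⟩, Set.mem_Iic.mpr bot_le⟩
  refine ⟨e, he, le_antisymm (fun x hx => ?_) heI⟩
  -- the part `y` of `x` outside `span {e}` generates an idempotent ideal that enlarges `span {e}`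
  set y := x - x * e
  have hyI : y ∈ I := sub_mem hx (I.mul_mem_left x (heI (mem_span_singleton_self e)))
  have hye : y * e = 0 := by rw [sub_mul, mul_assoc, he.eq, sub_self]
  obtain ⟨f, hf, hyf⟩ := exists_isIdempotentElem_span_singleton_eq (hreg y).choose_spec
  have hfe : f * e = 0 := by
    obtain ⟨c, rfl⟩ := mem_span_singleton'.mp (hyf ▸ mem_span_singleton_self f)
    rw [mul_assoc, hye, mul_zero]
  have hsup := span_sup_span_of_mul_eq_zero he hf hfe
  have hfe_le : span {f} ≤ span {e} := le_sup_right.trans <| hsup ▸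
    hmax ⟨⟨_, he.add_sub_mul_of_mul_eq_zero hf hfe, rfl⟩,
      hsup ▸ sup_le heI (hyf ▸ (span_singleton_le_iff_mem _).mpr hyI)⟩ (hsup ▸ le_sup_left)
  have hy : y = 0 := by
    rw [← hye, (mem_span_singleton_iff_mul_eq he).mp (hfe_le (hyf ▸ mem_span_singleton_self y))]
  exact (mem_span_singleton_iff_mul_eq he).mpr (sub_eq_zero.mp hy).symm

end Ideal

theorem IsSemisimpleRing.of_forall_exists_mul_mul_eq {Q : Type*} [Ring Q]
    (hreg : ∀ a : Q, ∃ b, a * b * a = a)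
    (hfin : ∀ f : ℕ → Q, (∀ n, IsIdempotentElem (f n)) → (∀ i j, i < j → f i * f j = 0) →
      ∃ n, f n = 0) :
    IsSemisimpleRing Q where
  exists_isCompl I := by
    obtain ⟨e, he, rfl⟩ :=
      Ideal.exists_isIdempotentElem_eq_span hreg (Ideal.wellFoundedOn_span_isIdempotentElem hfin) I
    exact Ideal.isComplemented_span_singleton he

section CampsDicks

open TwoSidedIdeal

variable {R S : Type*} [Ring R] [Ring S]

theorem isUnit_one_sub_mul_of_mem_span [IsDedekindFiniteMonoid S] {y x : S}
    (h : y ∈ Ideal.span {(1 - y * x) * y}) : IsUnit (1 - y * x) := by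
  obtain ⟨t, ht⟩ := Ideal.mem_span_singleton'.mp h
  have h0 : (1 - t * (1 - y * x)) * (y * x) = 0 := by
    rw [← mul_assoc, sub_mul, one_mul, mul_assoc, ht, sub_self, zero_mul]
  refine .of_mul_eq_one_right (1 + t - t * (1 - y * x)) ?_
  calc (1 + t - t * (1 - y * x)) * (1 - y * x) = 1 - (1 - t * (1 - y * x)) * (y * x) := by
        noncomm_ring
    _ = 1 := by rw [h0, sub_zero]

theorem isUnit_one_sub_mul_of_not_span_lt [IsDedekindFiniteMonoid S] (φ : R →+* S)
    [IsLocalHom φ] {c x : R} (h : ¬Ideal.span {φ (c - c * x * c)} < Ideal.span {φ c}) :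
    IsUnit (1 - c * x) := by
  have hc : φ (c - c * x * c) = (1 - φ c * φ x) * φ c := by
    rw [map_sub, map_mul, map_mul]; noncomm_ring
  have hle : Ideal.span {φ (c - c * x * c)} ≤ Ideal.span {φ c} := by
    rw [Ideal.span_singleton_le_iff_mem, hc]
    exact Ideal.mul_mem_left _ _ (Ideal.mem_span_singleton_self _)
  have hmem : φ c ∈ Ideal.span {(1 - φ c * φ x) * φ c} := by
    rw [← hc, hle.eq_of_not_lt h]; exact Ideal.mem_span_singleton_self _
  refine IsUnit.of_map φ _ ?_
  rw [map_sub, map_one, map_mul]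
  exact isUnit_one_sub_mul_of_mem_span hmem

variable [IsArtinianRing S]

theorem exists_sub_mul_mul_mem_jacobson (φ : R →+* S) [IsLocalHom φ] (a : R) :
    ∃ b, a - a * b * a ∈ jacobson (⊥ : TwoSidedIdeal R) := by
  obtain ⟨_, ⟨b, rfl⟩, hmin⟩ := IsArtinian.set_has_minimal
    (Set.range fun b => Ideal.span {φ (a - a * b * a)}) ⟨_, 0, rfl⟩
  refine ⟨b, mem_jacobson_bot_iff.mpr fun y => ?_⟩
  have hc : ∀ x, (a - a * b * a) - (a - a * b * a) * x * (a - a * b * a)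
      = a - a * (b + (1 - b * a) * x * (1 - a * b)) * a := fun x => by noncomm_ring
  have := isUnit_one_sub_mul_of_not_span_lt φ (c := a - a * b * a) (x := -y)
    (by rw [hc]; exact hmin _ ⟨_, rfl⟩)
  rwa [isUnit_one_sub_mul_comm, neg_mul, sub_neg_eq_add] at this

theorem exists_eq_zero_of_isIdempotentElem_of_mul_eq_zero (φ : R →+* S) [IsLocalHom φ]
    (f : ℕ → (jacobson (⊥ : TwoSidedIdeal R)).ringCon.Quotient)
    (hf : ∀ n, IsIdempotentElem (f n)) (horth : ∀ i j, i < j → f i * f j = 0) :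
    ∃ n, f n = 0 := by
  choose g hg using fun n => RingCon.mk'_surjective _ (f n)
  set p := (jacobson (⊥ : TwoSidedIdeal R)).ringCon.mk'
  -- `r (n + 1) = (1 - r n * g n) * r n` and `p (r n) * f m = f m` for `n ≤ m`; once the chain
  -- `S φ (r n)` becomes stationary, `1 - f n` is a unit
  let r : ℕ → R := fun n => Nat.rec 1 (fun m rm => rm - rm * g m * rm) n
  have hr : ∀ n m, n ≤ m → p (r n) * f m = f m := by
    intro n
    induction n with
    | zero => intro m _; rw [show r 0 = 1 from rfl, map_one, one_mul]
    | succ k ih =>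
      intro m hm
      rw [show r (k + 1) = r k - r k * g k * r k from rfl, map_sub, map_mul, map_mul, hg, sub_mul,
        mul_assoc, ih m (by omega), mul_assoc, horth k m hm, mul_zero, sub_zero]
  obtain ⟨_, ⟨n, rfl⟩, hmin⟩ := IsArtinian.set_has_minimal
    (Set.range fun n => Ideal.span {φ (r n)}) ⟨_, 0, rfl⟩
  have hu : IsUnit (1 - f n) := by
    simpa only [map_sub, map_one, map_mul, hg, hr n n le_rfl] using
      (isUnit_one_sub_mul_of_not_span_lt φ (hmin _ ⟨n + 1, rfl⟩)).map p
  exact ⟨n, hu.mul_left_eq_zero.mp (by rw [mul_sub, mul_one, (hf n).eq, sub_self])⟩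

end CampsDicks

theorem isSemilocalRing_of_isLocalHom {R : Type} {S : Type*} [Ring R] [Ring S] [IsArtinianRing S]
    (φ : R →+* S) [IsLocalHom φ] : IsSemilocalRing R := by
  refine IsSemisimpleRing.of_forall_exists_mul_mul_eq (fun a => ?_)
    (exists_eq_zero_of_isIdempotentElem_of_mul_eq_zero φ)
  obtain ⟨a, rfl⟩ := RingCon.mk'_surjective _ a
  obtain ⟨b, hb⟩ := exists_sub_mul_mul_mem_jacobson φ a
  have := (TwoSidedIdeal.ringCon_mk'_eq_zero_iff _).mpr hb
  rw [map_sub, map_mul, map_mul, sub_eq_zero] at this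
  exact ⟨_, this.symm⟩

section Retraction

variable {R A : Type*} [Ring R] [Ring A] (φ : R →+* A) (π : A →+ R)

theorem Ideal.comap_map_of_retraction (h1 : π 1 = 1) (hr : ∀ x r, π (x * φ r) = π x * r)
    (I : Ideal R) : (I.map φ).comap φ = I := by
  -- the largest left ideal of `A` on which `π` takes values in `I`
  let T : Ideal A :=
    { carrier := {x | ∀ a, π (a * x) ∈ I}
      add_mem' := fun hx hy a => by rw [mul_add, map_add]; exact I.add_mem (hx a) (hy a)
      zero_mem' := fun a => by rw [mul_zero, map_zero]; exact I.zero_mem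
      smul_mem' := fun b x hx a => by rw [smul_eq_mul, ← mul_assoc]; exact hx (a * b) }
  have hT : I.map φ ≤ T := Ideal.map_le_iff_le_comap.mpr fun i hi a => by
    show π (a * φ i) ∈ I
    rw [hr]; exact I.mul_mem_left _ hi
  refine le_antisymm (fun x hx => ?_) Ideal.le_comap_map
  have : π (1 * φ x) ∈ I := hT hx 1
  rwa [hr, h1, one_mul] at this

theorem Ideal.map_strictMono_of_retraction (h1 : π 1 = 1) (hr : ∀ x r, π (x * φ r) = π x * r) :
    StrictMono (Ideal.map φ : Ideal R → Ideal A) :=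
  Monotone.strictMono_of_injective (fun _ _ => Ideal.map_mono)
    (Function.LeftInverse.injective (Ideal.comap_map_of_retraction φ π h1 hr))

theorem RingHom.isLocalHom_of_retraction (h1 : π 1 = 1) (hl : ∀ r x, π (φ r * x) = r * π x)
    (hr : ∀ x r, π (x * φ r) = π x * r) : IsLocalHom φ where
  map_nonunit r := fun ⟨u, hu⟩ => isUnit_iff_exists.mpr
    ⟨π ↑u⁻¹, by rw [← hl, ← hu, u.mul_inv, h1], by rw [← hr, ← hu, u.inv_mul, h1]⟩

end Retraction

theorem UnitalTwistedPartialAction.inv_one_apply {G R : Type} [Group G] [Ring R]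
    (pa : UnitalTwistedPartialAction G R) (x : R) : pa.inv 1 x = x := by
  simpa only [pa.act_one] using pa.inv_act 1 x (by rw [inv_one, pa.e_one, one_mul])

namespace IsCrossedProduct

variable {G R : Type} [Group G] [Ring R] {pa : UnitalTwistedPartialAction G R}
  {A : Type} [Ring A] {δ : G → R → A} (hcp : IsCrossedProduct pa A δ)

def deltaAddHom (g : G) : R →+ A := AddMonoidHom.mk' (δ g) (hcp.add g)

noncomputable def sumDelta : (G →₀ R) →+ A := Finsupp.liftAddHom hcp.deltaAddHom

theorem sumDelta_single (g : G) (a : R) : hcp.sumDelta (Finsupp.single g a) = δ g a :=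
  Finsupp.liftAddHom_apply_single _ _ _

theorem sumDelta_surjective : Function.Surjective hcp.sumDelta := fun x => by
  obtain ⟨s, a, -, rfl⟩ := hcp.span x
  exact ⟨∑ g ∈ s, Finsupp.single g (a g), by simp only [map_sum, sumDelta_single]⟩

theorem apply_one_eq_zero_of_sumDelta_eq_zero {f : G →₀ R} (hf : hcp.sumDelta f = 0) :
    f 1 = 0 := by
  by_cases h1 : (1 : G) ∈ f.support
  · have := hcp.indep f.support (fun g => pa.e g * f g) (fun g => by rw [← mul_assoc, pa.idem])
      (by rw [← hf, sumDelta, Finsupp.liftAddHom_apply, Finsupp.sum]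
          exact Finset.sum_congr rfl fun g _ => (hcp.proj g (f g)).symm) 1 h1
    rwa [pa.e_one, one_mul] at this
  · exact Finsupp.notMem_support_iff.mp h1

noncomputable def coeffOne : A →+ R :=
  hcp.sumDelta.liftOfSurjective hcp.sumDelta_surjective
    ⟨Finsupp.applyAddHom 1, fun _ hf => hcp.apply_one_eq_zero_of_sumDelta_eq_zero hf⟩

theorem coeffOne_delta_one (a : R) : hcp.coeffOne (δ 1 a) = a := by
  rw [← hcp.sumDelta_single, coeffOne, AddMonoidHom.liftOfRightInverse_comp_apply]
  exact Finsupp.single_eq_same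

theorem coeffOne_delta_of_ne {g : G} (hg : g ≠ 1) (a : R) : hcp.coeffOne (δ g a) = 0 := by
  rw [← hcp.sumDelta_single, coeffOne, AddMonoidHom.liftOfRightInverse_comp_apply]
  exact Finsupp.single_eq_of_ne hg.symm

theorem addMonoidHom_ext (hcp : IsCrossedProduct pa A δ) {M : Type*} [AddCommMonoid M]
    {f₁ f₂ : A →+ M} (h : ∀ g a, f₁ (δ g a) = f₂ (δ g a)) : f₁ = f₂ :=
  (AddMonoidHom.cancel_right hcp.sumDelta_surjective).mp <|
    Finsupp.addHom_ext fun g a => by simp only [AddMonoidHom.comp_apply, sumDelta_single, h]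

theorem exists_delta_mul_delta (hcp : IsCrossedProduct pa A δ) (g h : G) (a b : R) :
    ∃ c, δ g a * δ h b = δ (g * h) c := by
  rw [hcp.proj g a, hcp.proj h b]
  exact ⟨_, hcp.mul g h _ _ (by rw [← mul_assoc, pa.idem]) (by rw [← mul_assoc, pa.idem])⟩

def iota : R →+* A :=
  { hcp.deltaAddHom 1 with
    map_one' := hcp.one
    map_mul' := fun a b => by
      show δ 1 (a * b) = δ 1 a * δ 1 b
      rw [hcp.mul 1 1 a b (by rw [pa.e_one, one_mul]) (by rw [pa.e_one, one_mul]), one_mul,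
        pa.act_one, pa.inv_one_apply, pa.w_one_left, pa.e_one, mul_one] }

theorem iota_apply (r : R) : hcp.iota r = δ 1 r := rfl

theorem coeffOne_iota (r : R) : hcp.coeffOne (hcp.iota r) = r :=
  hcp.coeffOne_delta_one r

theorem coeffOne_one : hcp.coeffOne 1 = 1 := by
  rw [← map_one hcp.iota, coeffOne_iota]

theorem coeffOne_iota_mul (r : R) (x : A) :
    hcp.coeffOne (hcp.iota r * x) = r * hcp.coeffOne x := by
  refine DFunLike.congr_fun (hcp.addMonoidHom_ext
    (f₁ := hcp.coeffOne.comp (.mulLeft (hcp.iota r)))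
    (f₂ := (AddMonoidHom.mulLeft r).comp hcp.coeffOne) fun g a => ?_) x
  simp only [AddMonoidHom.comp_apply, AddMonoidHom.coe_mulLeft]
  by_cases hg : g = 1
  · subst hg; rw [← hcp.iota_apply, ← map_mul, coeffOne_iota, coeffOne_iota]
  · obtain ⟨c, hc⟩ := hcp.exists_delta_mul_delta 1 g r a
    rw [iota_apply, hc, one_mul, coeffOne_delta_of_ne _ hg, coeffOne_delta_of_ne _ hg, mul_zero]

theorem coeffOne_mul_iota (x : A) (r : R) :
    hcp.coeffOne (x * hcp.iota r) = hcp.coeffOne x * r := by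
  refine DFunLike.congr_fun (hcp.addMonoidHom_ext
    (f₁ := hcp.coeffOne.comp (.mulRight (hcp.iota r)))
    (f₂ := (AddMonoidHom.mulRight r).comp hcp.coeffOne) fun g a => ?_) x
  simp only [AddMonoidHom.comp_apply, AddMonoidHom.coe_mulRight]
  by_cases hg : g = 1
  · subst hg; rw [← hcp.iota_apply, ← map_mul, coeffOne_iota, coeffOne_iota]
  · obtain ⟨c, hc⟩ := hcp.exists_delta_mul_delta g 1 a r
    rw [iota_apply, hc, mul_one, coeffOne_delta_of_ne _ hg, coeffOne_delta_of_ne _ hg, zero_mul]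

end IsCrossedProduct

/-- Let `α` be a unital twisted partial action of `G` on a
unital ring `R`.  If `R*_{α,w}G` is right artinian (resp. right noetherian,
semilocal), then so is `R`. -/
theorem base_ring_of_crossedProduct
    {G R : Type} [Group G] [Ring R]
    (pa : UnitalTwistedPartialAction G R)
    (A : Type) [Ring A] (δ : G → R → A)
    (hcp : IsCrossedProduct pa A δ) :
    (IsRightArtinianRing A → IsRightArtinianRing R) ∧
    (IsRightNoetherianRing A → IsRightNoetherianRing R) ∧
    (IsSemilocalRing A → IsSemilocalRing R) := by
  -- right ideals of `R` are left ideals of `Rᵐᵒᵖ`, over which `coeffOne` is right linear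
  have hmono := Ideal.map_strictMono_of_retraction (RingHom.op hcp.iota) hcp.coeffOne.mulOp
    (congrArg MulOpposite.op hcp.coeffOne_one) fun x r =>
      congrArg MulOpposite.op (hcp.coeffOne_iota_mul r.unop x.unop)
  refine ⟨fun (_ : IsArtinianRing Aᵐᵒᵖ) => hmono.wellFoundedLT, fun h => ?_,
    fun (_ : IsSemisimpleRing _) => ?_⟩
  · have := isNoetherian_iff'.mp h
    exact isNoetherian_iff'.mpr hmono.wellFoundedGT
  · have := hcp.iota.isLocalHom_of_retraction hcp.coeffOne hcp.coeffOne_one hcp.coeffOne_iota_mul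
      hcp.coeffOne_mul_iota
    exact isSemilocalRing_of_isLocalHom
      ((TwoSidedIdeal.jacobson (⊥ : TwoSidedIdeal A)).ringCon.mk'.comp hcp.iota)
end

section
/- Let α be a unital twisted partial action of a finite group G on a unital ring R. Then R is right noetherian if and only if R*_{α,w}G is right noetherian. -/
/-!
`δ 1` embeds `R` into `A = R *_{α,w} G`, and `A` is generated as a right `R`-module by the
finitely many elements `δ g (e g)`, since `δ g c = δ g (e g) · δ 1 (α_g⁻¹ c)`; so `A` inherits
right noetherianity from `R`. Conversely, `δ 1 (r) · δ g (c) = δ g (r c)`, so taking the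
`1`-component is a left `R`-linear retraction `π` of `δ 1`. For a right ideal `I` of `R`, the
right ideal `{x | π (x A) ⊆ I}` of `A` meets `δ 1 (R)` exactly in `δ 1 (I)`, which embeds the
lattice of right ideals of `R` into that of `A`.
-/

open MulOpposite

section RightNoetherian

variable {R A : Type} [Ring R] [Ring A]

theorem IsRightNoetherianRing.of_ringHom_of_sum_mul {ι : Type*} [Fintype ι] (φ : R →+* A)
    (u : ι → A) (hu : ∀ x, ∃ r : ι → R, x = ∑ i, u i * φ (r i))
    (hR : IsRightNoetherianRing R) : IsRightNoetherianRing A := by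
  let := φ.op.toModule
  have : IsScalarTower Rᵐᵒᵖ Aᵐᵒᵖ Aᵐᵒᵖ := ⟨fun r a x => mul_assoc (φ.op r) a x⟩
  have : Module.Finite Rᵐᵒᵖ Aᵐᵒᵖ := by
    refine Module.finite_def.mpr (Submodule.fg_def.mpr
      ⟨Set.range (op ∘ u), Set.finite_range _, eq_top_iff.mpr fun x _ => ?_⟩)
    obtain ⟨r, hr⟩ := hu (unop x)
    refine Submodule.mem_span_range_iff_exists_fun _ |>.mpr ⟨op ∘ r, unop_injective ?_⟩
    rw [Finset.unop_sum, hr]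
    rfl
  have : IsNoetherianRing Rᵐᵒᵖ := hR
  exact IsNoetherianRing.of_finite Rᵐᵒᵖ Aᵐᵒᵖ

theorem IsRightNoetherianRing.of_ringHom_of_leftInverse (φ : R →+* A) (π : A →+ R)
    (hπ : ∀ r x, π (φ r * x) = r * π x) (hφ : Function.LeftInverse π φ)
    (hA : IsRightNoetherianRing A) : IsRightNoetherianRing R := by
  let K : Ideal Rᵐᵒᵖ → Ideal Aᵐᵒᵖ := fun I =>
    { carrier := {x | ∀ y : A, op (π (unop x * y)) ∈ I}
      add_mem' := fun hx hy z => by simpa [add_mul] using I.add_mem (hx z) (hy z)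
      zero_mem' := fun z => by simp
      smul_mem' := fun a x hx z => by simpa [mul_assoc] using hx (unop a * z) }
  have hK : ∀ I r, op (φ (unop r)) ∈ K I ↔ r ∈ I := fun I r =>
    ⟨fun h => by simpa [hφ (unop r)] using h 1,
     fun h z => by simpa [hπ] using I.mul_mem_left (op (π z)) h⟩
  have hK_strictMono : StrictMono K := Monotone.strictMono_of_injective
    (fun I J hIJ x hx z => hIJ (hx z))
    (fun I J hIJ => Ideal.ext fun r => by rw [← hK, hIJ, hK])
  unfold IsRightNoetherianRing at hA ⊢
  rw [isNoetherianRing_iff, isNoetherian_iff'] at hA ⊢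
  exact hK_strictMono.wellFoundedGT

end RightNoetherian

namespace UnitalTwistedPartialAction

variable {G R : Type} [Group G] [Ring R] (pa : UnitalTwistedPartialAction G R)

theorem mul_e_of_e_mul {g : G} {x : R} (h : pa.e g * x = x) : x * pa.e g = x := by
  rw [← pa.central, h]

theorem act_e_inv (g : G) : pa.act g (pa.e g⁻¹) = pa.e g := by
  obtain ⟨x, hx, -, hgx⟩ := pa.act_range' g 1 (pa.e g) (pa.idem g) (by rw [mul_one, pa.idem])
  calc pa.act g (pa.e g⁻¹) = pa.e g * pa.act g (pa.e g⁻¹) := (pa.act_mem g _ (pa.idem g⁻¹)).symm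
    _ = pa.act g (pa.e g⁻¹) * pa.act g x := by rw [pa.central, hgx]
    _ = pa.e g := by rw [← pa.act_mul g _ x (pa.idem g⁻¹) hx, hx, hgx]

theorem e_inv_mul_inv {g : G} {c : R} (hc : pa.e g * c = c) :
    pa.e g⁻¹ * pa.inv g c = pa.inv g c := by
  obtain ⟨x, hx, -, rfl⟩ := pa.act_range' g 1 c hc (by rwa [mul_one])
  rwa [pa.inv_act g x hx]

theorem inv_e (g : G) : pa.inv g (pa.e g) = pa.e g⁻¹ := by
  rw [← pa.act_e_inv g, pa.inv_act g _ (pa.idem g⁻¹)]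

theorem inv_one_apply_s9 (a : R) : pa.inv 1 a = a := by
  simpa [pa.act_one] using pa.inv_act 1 a (by rw [inv_one, pa.e_one, one_mul])

end UnitalTwistedPartialAction

namespace IsCrossedProduct

variable {G R : Type} [Group G] [Ring R] {pa : UnitalTwistedPartialAction G R}
  {A : Type} [Ring A] {δ : G → R → A} (hcp : IsCrossedProduct pa A δ)
include hcp

theorem delta_zero (g : G) : δ g 0 = 0 := by
  simpa using hcp.add g 0 0

theorem delta_sub (g : G) (a b : R) : δ g (a - b) = δ g a - δ g b :=
  eq_sub_of_add_eq (by rw [← hcp.add, sub_add_cancel])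

theorem deltaOne_mul (g : G) (a b : R) (hb : pa.e g * b = b) :
    δ 1 a * δ g b = δ g (a * b) := by
  rw [hcp.mul 1 g a b (by rw [pa.e_one, one_mul]) hb, one_mul, pa.inv_one_apply_s9, pa.act_one,
    pa.w_one_left, mul_assoc, pa.mul_e_of_e_mul hb]

def deltaOneHom : R →+* A :=
  { toFun := δ 1
    map_one' := hcp.one
    map_mul' := fun a b => (hcp.deltaOne_mul 1 a b (by rw [pa.e_one, one_mul])).symm
    map_zero' := hcp.delta_zero 1
    map_add' := hcp.add 1 }

theorem delta_eq_delta_e_mul (g : G) (c : R) (hc : pa.e g * c = c) :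
    δ g c = δ g (pa.e g) * δ 1 (pa.inv g c) := by
  rw [hcp.mul g 1 _ _ (pa.idem g) (by rw [pa.e_one, one_mul]), mul_one, pa.inv_e,
    pa.e_inv_mul_inv hc, pa.act_inv g c hc, pa.w_one_right, pa.mul_e_of_e_mul hc]

variable [Fintype G]

theorem exists_eq_sum (x : A) :
    ∃ c : G → R, (∀ g, pa.e g * c g = c g) ∧ x = ∑ g, δ g (c g) := by
  classical
  obtain ⟨s, a, ha, rfl⟩ := hcp.span x
  refine ⟨fun g => if g ∈ s then a g else 0, fun g => ?_, ?_⟩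
  · dsimp only
    split_ifs
    exacts [ha g, mul_zero _]
  · simp only [apply_ite (δ _), hcp.delta_zero]
    rw [Finset.sum_ite_mem, Finset.univ_inter]

theorem eq_of_sum_eq {c d : G → R} (hc : ∀ g, pa.e g * c g = c g) (hd : ∀ g, pa.e g * d g = d g)
    (h : ∑ g, δ g (c g) = ∑ g, δ g (d g)) : c = d := by
  funext g
  refine sub_eq_zero.mp (hcp.indep Finset.univ (c - d) (fun g => ?_) ?_ g (Finset.mem_univ g))
  · simp [mul_sub, hc g, hd g]
  · simpa only [Pi.sub_apply, hcp.delta_sub, Finset.sum_sub_distrib, sub_eq_zero] using h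

theorem exists_eq_sum_delta_e_mul (x : A) :
    ∃ r : G → R, x = ∑ g, δ g (pa.e g) * δ 1 (r g) := by
  obtain ⟨c, hc, rfl⟩ := hcp.exists_eq_sum x
  exact ⟨fun g => pa.inv g (c g),
    Finset.sum_congr rfl fun g _ => hcp.delta_eq_delta_e_mul g (c g) (hc g)⟩

noncomputable def component (g : G) : A →+ R :=
  AddMonoidHom.mk' (fun x => (hcp.exists_eq_sum x).choose g) fun x y => by
    obtain ⟨hx, hx_sum⟩ := (hcp.exists_eq_sum x).choose_spec
    obtain ⟨hy, hy_sum⟩ := (hcp.exists_eq_sum y).choose_spec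
    obtain ⟨hxy, hxy_sum⟩ := (hcp.exists_eq_sum (x + y)).choose_spec
    refine congrFun (hcp.eq_of_sum_eq (d := (hcp.exists_eq_sum x).choose +
      (hcp.exists_eq_sum y).choose) hxy (fun g => by rw [Pi.add_apply, mul_add, hx, hy]) ?_) g
    rw [← hxy_sum]
    simp only [Pi.add_apply, hcp.add, Finset.sum_add_distrib, ← hx_sum, ← hy_sum]

theorem component_sum {c : G → R} (hc : ∀ g, pa.e g * c g = c g) (g : G) :
    hcp.component g (∑ h, δ h (c h)) = c g :=
  have hspec := (hcp.exists_eq_sum (∑ h, δ h (c h))).choose_spec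
  congrFun (hcp.eq_of_sum_eq hspec.1 hc hspec.2.symm) g

theorem component_delta_self (g : G) {a : R} (ha : pa.e g * a = a) :
    hcp.component g (δ g a) = a := by
  classical
  have hsingle : ∀ h, pa.e h * (Pi.single g a : G → R) h = (Pi.single g a : G → R) h := by
    intro h
    by_cases hg : h = g
    · subst hg; simpa using ha
    · simp [hg]
  have hδ : δ g a = ∑ h, δ h ((Pi.single g a : G → R) h) := by
    rw [Fintype.sum_eq_single g fun h hg => by simp [hg, hcp.delta_zero], Pi.single_eq_same]
  rw [hδ, hcp.component_sum hsingle, Pi.single_eq_same]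

theorem component_one_deltaOne_mul (r : R) (x : A) :
    hcp.component 1 (δ 1 r * x) = r * hcp.component 1 x := by
  obtain ⟨c, hc, rfl⟩ := hcp.exists_eq_sum x
  have hrc : ∀ g, pa.e g * (r * c g) = r * c g := fun g => by
    rw [← mul_assoc, pa.central, mul_assoc, hc g]
  rw [Finset.mul_sum, Finset.sum_congr rfl fun g _ => hcp.deltaOne_mul g r (c g) (hc g),
    hcp.component_sum hrc, hcp.component_sum hc]

end IsCrossedProduct

/-- Let `α` be a unital twisted partial action of a finite
group `G` on a unital ring `R`.  Then `R` is right noetherian if and only if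
`R*_{α,w}G` is right noetherian. -/
theorem crossedProduct_rightNoetherian_iff_of_finite_group
    {G R : Type} [Group G] [Finite G] [Ring R]
    (pa : UnitalTwistedPartialAction G R)
    (A : Type) [Ring A] (δ : G → R → A)
    (hcp : IsCrossedProduct pa A δ) :
    IsRightNoetherianRing R ↔ IsRightNoetherianRing A := by
  cases nonempty_fintype G
  exact ⟨.of_ringHom_of_sum_mul hcp.deltaOneHom _ hcp.exists_eq_sum_delta_e_mul,
    .of_ringHom_of_leftInverse hcp.deltaOneHom (hcp.component 1) hcp.component_one_deltaOne_mul
      fun r => hcp.component_delta_self 1 (by rw [pa.e_one, one_mul])⟩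
end

section
/- Let α be a partial action of a finite group G on a unital ring R (with each domain D_g generated by a central idempotent). If R has right Krull dimension, then the partial skew group ring R*_α G has right Krull dimension and Kdim(R*_α G) ≤ Kdim(R). -/
/-- A unital (untwisted) partial action of a group `G` on a unital ring `R`:
the domain `D g` is the ideal generated by the central idempotent `e g`
(`D g = {x | e g * x = x}`), and `act g` is the ring isomorphism
`α_g : D g⁻¹ → D g` (values outside `D g⁻¹` are irrelevant). -/
structure PartialAction (G : Type) [Group G] (R : Type) [Ring R] where
  e : G → R
  idem : ∀ g, e g * e g = e g
  central : ∀ g r, e g * r = r * e g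
  e_one : e 1 = 1
  act : G → R → R
  act_mem : ∀ g x, e g⁻¹ * x = x → e g * act g x = act g x
  act_add : ∀ g x y, e g⁻¹ * x = x → e g⁻¹ * y = y →
    act g (x + y) = act g x + act g y
  act_mul : ∀ g x y, e g⁻¹ * x = x → e g⁻¹ * y = y →
    act g (x * y) = act g x * act g y
  act_one : ∀ x, act 1 x = x
  inv_act : ∀ g x, e g⁻¹ * x = x → act g⁻¹ (act g x) = x
  -- α_g(D_{g⁻¹} ∩ D_h) = D_g ∩ D_{gh}
  act_range : ∀ g h x, e g⁻¹ * x = x → e h * x = x → e (g * h) * act g x = act g x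
  act_range' : ∀ g h y, e g * y = y → e (g * h) * y = y →
    ∃ x, e g⁻¹ * x = x ∧ e h * x = x ∧ act g x = y
  -- α_g ∘ α_h = α_{gh} on α_{h⁻¹}(D_h ∩ D_{g⁻¹})
  comp : ∀ g h a, e h⁻¹ * a = a → e (h⁻¹ * g⁻¹) * a = a →
    act g (act h a) = act (g * h) a

/-- A realization of the partial skew group ring `R *_α G`:  a ring `A` with
maps `δ g : D g → A` such that `A = ⊕_{g ∈ G} D g δ_g` with multiplication
`(a δ_g)(b δ_h) = α_g(α_{g⁻¹}(a) b) δ_{gh}`. -/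
structure IsPartialSkewGroupRing {G R : Type} [Group G] [Ring R]
    (pa : PartialAction G R) (A : Type) [Ring A] (δ : G → R → A) : Prop where
  proj : ∀ g a, δ g a = δ g (pa.e g * a)
  add : ∀ g a b, δ g (a + b) = δ g a + δ g b
  mul : ∀ g h a b, pa.e g * a = a → pa.e h * b = b →
    δ g a * δ h b = δ (g * h) (pa.act g (pa.act g⁻¹ a * b))
  one : δ 1 1 = 1
  indep : ∀ (s : Finset G) (a : G → R), (∀ g, pa.e g * a g = a g) →
    (∑ g ∈ s, δ g (a g)) = 0 → ∀ g ∈ s, a g = 0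
  span : ∀ x : A, ∃ (s : Finset G) (a : G → R),
    (∀ g, pa.e g * a g = a g) ∧ x = ∑ g ∈ s, δ g (a g)
/-- `DeviationLE o α` says that the deviation of the poset `α` (in the sense of
Gabriel–Rentschler) is at most the ordinal `o`:  in every descending chain
`f 0 ≥ f 1 ≥ …`, for all but finitely many `n` the factor interval
`[f (n+1), f n]` is either trivial or has deviation `≤ o'` for some `o' < o`. -/
def DeviationLE (o : Ordinal.{0}) (α : Type) [Preorder α] : Prop :=
  ∀ f : ℕ → α, (∀ n, f (n + 1) ≤ f n) →
    ∃ N : ℕ, ∀ n ≥ N, f n ≤ f (n + 1) ∨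
      ∃ (o' : Ordinal.{0}) (_ : o' < o),
        DeviationLE o' (Set.Icc (f (n + 1)) (f n))
termination_by o

/-- A module `M` has Krull dimension when the lattice of its submodules has
(ordinal-valued) deviation. -/
def HasKrullDimModule (R M : Type) [Ring R] [AddCommGroup M] [Module R M] : Prop :=
  ∃ o : Ordinal.{0}, DeviationLE o (Submodule R M)

/-- A ring has right Krull dimension when the lattice of its right ideals,
i.e. of left ideals of the opposite ring, has deviation. -/
def HasRightKrullDim (A : Type) [Ring A] : Prop :=
  ∃ o : Ordinal.{0}, DeviationLE o (Submodule Aᵐᵒᵖ Aᵐᵒᵖ)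

/-- `Kdim A ≤ Kdim B` (for the right Krull dimensions):  every ordinal bounding
the deviation of the right ideal lattice of `B` also bounds that of `A`. -/
def RightKrullDimLE (A B : Type) [Ring A] [Ring B] : Prop :=
  ∀ o : Ordinal.{0}, DeviationLE o (Submodule Bᵐᵒᵖ Bᵐᵒᵖ) →
    DeviationLE o (Submodule Aᵐᵒᵖ Aᵐᵒᵖ)

/-!
Via `r ↦ r δ₁`, the ring `R *_α G` is a right `R`-module generated by the finitely many
elements `1_g δ_g`, because `a δ_g = (1_g δ_g)(α_{g⁻¹}(a) δ₁)` for `a ∈ D_g`. Deviation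
bounds are inherited by products of posets and pulled back along strictly monotone maps, so they
pass from `R_R` to free modules of finite rank, to their quotients, and finally, by restriction
of scalars, from `R`-submodules of `R *_α G` to its right ideals.
-/

theorem DeviationLE.mono {α : Type} [Preorder α] {o o' : Ordinal.{0}} (h : o ≤ o')
    (hd : DeviationLE o α) : DeviationLE o' α := by
  rw [DeviationLE] at hd ⊢
  intro f hf
  obtain ⟨N, hN⟩ := hd f hf
  refine ⟨N, fun n hn => (hN n hn).imp_right ?_⟩
  rintro ⟨o'', ho'', hdev⟩
  exact ⟨o'', ho''.trans_le h, hdev⟩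

theorem DeviationLE.of_forall_le {α : Type} [Preorder α] (o : Ordinal.{0})
    (h : ∀ a b : α, a ≤ b) : DeviationLE o α := by
  rw [DeviationLE]
  exact fun f _ => ⟨0, fun n _ => Or.inl (h _ _)⟩

theorem DeviationLE.of_strictMono {α β : Type} [Preorder α] [Preorder β] {o : Ordinal.{0}}
    {g : α → β} (hg : Monotone g) (hg' : StrictMono g) (h : DeviationLE o β) :
    DeviationLE o α := by
  induction o using WellFoundedLT.induction generalizing α β with
  | _ o IH =>
    rw [DeviationLE] at h ⊢
    intro f hf
    obtain ⟨N, hN⟩ := h (g ∘ f) (fun n => hg (hf n))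
    refine ⟨N, fun n hn => ?_⟩
    rcases hN n hn with hle | ⟨o', ho', hdev⟩
    · left
      by_contra hnot
      exact (hg' (lt_of_le_not_ge (hf n) hnot)).not_ge hle
    · refine Or.inr ⟨o', ho', IH o' ho' (g := hg.mapsTo_Icc.restrict g _ _)
        (fun _ _ hxy => hg hxy) (fun _ _ hxy => hg' hxy) hdev⟩

theorem DeviationLE.of_le_iff {α β : Type} [Preorder α] [Preorder β] {o : Ordinal.{0}}
    {g : α → β} (hg : ∀ a b, g a ≤ g b ↔ a ≤ b) (h : DeviationLE o β) : DeviationLE o α :=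
  h.of_strictMono (fun _ _ hab => (hg _ _).2 hab)
    (fun _ _ hab => lt_iff_le_not_ge.2 ⟨(hg _ _).2 hab.le, fun h => hab.not_ge ((hg _ _).1 h)⟩)

theorem DeviationLE.prod {α β : Type} [Preorder α] [Preorder β] {o : Ordinal.{0}}
    (ha : DeviationLE o α) (hb : DeviationLE o β) : DeviationLE o (α × β) := by
  induction o using WellFoundedLT.induction generalizing α β with
  | _ o IH =>
    rw [DeviationLE] at ha hb ⊢
    intro f hf
    obtain ⟨N₁, hN₁⟩ := ha (fun n => (f n).1) (fun n => (hf n).1)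
    obtain ⟨N₂, hN₂⟩ := hb (fun n => (f n).2) (fun n => (hf n).2)
    refine ⟨max N₁ N₂, fun n hn => ?_⟩
    set I₁ := Set.Icc (f (n + 1)).1 (f n).1
    set I₂ := Set.Icc (f (n + 1)).2 (f n).2
    -- an interval of the product embeds into the product of its coordinate intervals
    have split : ∀ o' < o, DeviationLE o' I₁ → DeviationLE o' I₂ →
        DeviationLE o' (Set.Icc (f (n + 1)) (f n)) := fun o' ho' h₁ h₂ =>
      (IH o' ho' h₁ h₂).of_le_iff (g := fun x : Set.Icc (f (n + 1)) (f n) =>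
        ((⟨x.1.1, x.2.1.1, x.2.2.1⟩ : I₁), (⟨x.1.2, x.2.1.2, x.2.2.2⟩ : I₂)))
        fun _ _ => ⟨fun h => h, fun h => h⟩
    have trivial₁ : (f n).1 ≤ (f (n + 1)).1 → ∀ o', DeviationLE o' I₁ := fun h o' =>
      .of_forall_le o' fun x y => x.2.2.trans (h.trans y.2.1)
    have trivial₂ : (f n).2 ≤ (f (n + 1)).2 → ∀ o', DeviationLE o' I₂ := fun h o' =>
      .of_forall_le o' fun x y => x.2.2.trans (h.trans y.2.1)
    rcases hN₁ n (le_of_max_le_left hn), hN₂ n (le_of_max_le_right hn) with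
      ⟨h₁ | ⟨o₁, ho₁, hd₁⟩, h₂ | ⟨o₂, ho₂, hd₂⟩⟩
    · exact Or.inl ⟨h₁, h₂⟩
    · exact Or.inr ⟨o₂, ho₂, split o₂ ho₂ (trivial₁ h₁ o₂) hd₂⟩
    · exact Or.inr ⟨o₁, ho₁, split o₁ ho₁ hd₁ (trivial₂ h₂ o₁)⟩
    · exact Or.inr ⟨max o₁ o₂, max_lt ho₁ ho₂, split _ (max_lt ho₁ ho₂)
        (hd₁.mono (le_max_left _ _)) (hd₂.mono (le_max_right _ _))⟩

section Submodule

variable {S M : Type} [Ring S] [AddCommGroup M] [Module S M] {o : Ordinal.{0}}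

theorem DeviationLE.submodule_of_surjective {M' : Type} [AddCommGroup M'] [Module S M']
    {f : M →ₗ[S] M'} (hf : Function.Surjective f) (h : DeviationLE o (Submodule S M)) :
    DeviationLE o (Submodule S M') :=
  h.of_le_iff fun _ _ => Submodule.comap_le_comap_iff_of_surjective hf

theorem DeviationLE.submodule_prod {M' : Type} [AddCommGroup M'] [Module S M']
    (h : DeviationLE o (Submodule S M)) (h' : DeviationLE o (Submodule S M')) :
    DeviationLE o (Submodule S (M × M')) := by
  let g (P : Submodule S (M × M')) : Submodule S M × Submodule S M' :=
    (P.comap (LinearMap.inl S M M'), P.map (LinearMap.snd S M M'))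
  have hg : Monotone g := fun P Q hPQ =>
    Prod.mk_le_mk.2 ⟨Submodule.comap_mono hPQ, Submodule.map_mono hPQ⟩
  refine (h.prod h').of_strictMono hg fun P Q hPQ =>
    lt_of_le_not_ge (hg hPQ.le) fun hQP => hPQ.not_ge fun x hx => ?_
  obtain ⟨hinl, hsnd⟩ := Prod.mk_le_mk.1 hQP
  -- subtract from `x` an element of `P` with the same second coordinate
  obtain ⟨p, hp, hpx⟩ := hsnd ⟨x, hx, rfl⟩
  have hxp : x - p = LinearMap.inl S M M' (x.1 - p.1) := by
    ext <;> simp [show p.2 = x.2 from hpx]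
  have hxpQ : LinearMap.inl S M M' (x.1 - p.1) ∈ Q := hxp ▸ Q.sub_mem hx (hPQ.le hp)
  simpa using (show x - p + p ∈ P from hxp ▸ P.add_mem (hinl hxpQ) hp)

theorem DeviationLE.submodule_pi (h : DeviationLE o (Submodule S S)) :
    ∀ n : ℕ, DeviationLE o (Submodule S (Fin n → S))
  | 0 => .of_forall_le o fun P Q => le_of_eq (Subsingleton.elim P Q)
  | n + 1 => (h.submodule_prod (h.submodule_pi n)).submodule_of_surjective
      (Fin.consLinearEquiv S fun _ : Fin (n + 1) => S).surjective

theorem DeviationLE.submodule_of_finite [Module.Finite S M] (h : DeviationLE o (Submodule S S)) :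
    DeviationLE o (Submodule S M) :=
  have ⟨n, _, hf⟩ := Module.Finite.exists_fin' S M
  (h.submodule_pi n).submodule_of_surjective hf

theorem DeviationLE.of_restrictScalars {B : Type} [Ring B] [Module B M] [SMul S B]
    [IsScalarTower S B M] (h : DeviationLE o (Submodule S M)) : DeviationLE o (Submodule B M) :=
  h.of_le_iff fun _ _ => Submodule.restrictScalars_le S

end Submodule

theorem rightKrullDimLE_of_ringHom_of_fg {R A ι : Type} [Ring R] [Ring A] [Finite ι]
    (φ : R →+* A) (v : ι → A)
    (hv : ∀ x : A, ∃ (s : Finset ι) (c : ι → R), x = ∑ i ∈ s, v i * φ (c i)) :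
    RightKrullDimLE A R := by
  intro o ho
  let _ : Module Rᵐᵒᵖ Aᵐᵒᵖ := Module.compHom Aᵐᵒᵖ φ.op
  have : IsScalarTower Rᵐᵒᵖ Aᵐᵒᵖ Aᵐᵒᵖ := ⟨fun _ _ _ => mul_assoc _ _ _⟩
  have : Module.Finite Rᵐᵒᵖ Aᵐᵒᵖ := by
    refine ⟨Submodule.fg_def.2 ⟨Set.range (MulOpposite.op ∘ v), Set.finite_range _,
      eq_top_iff.2 fun x _ => ?_⟩⟩
    obtain ⟨s, c, hx⟩ := hv x.unop
    rw [← MulOpposite.op_unop x, hx, Finset.op_sum]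
    exact Submodule.sum_mem _ fun i _ =>
      Submodule.smul_mem _ (MulOpposite.op (c i)) (Submodule.subset_span ⟨i, rfl⟩)
  exact ho.submodule_of_finite.of_restrictScalars

namespace PartialAction

variable {G R : Type} [Group G] [Ring R] (pa : PartialAction G R)

theorem act_act_inv {g : G} {x : R} (hx : pa.e g * x = x) : pa.act g (pa.act g⁻¹ x) = x := by
  simpa using pa.inv_act g⁻¹ x (by simpa using hx)

theorem act_inv_e_mul {g : G} {x : R} (hx : pa.e g * x = x) :
    pa.act g⁻¹ (pa.e g) * pa.act g⁻¹ x = pa.act g⁻¹ x := by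
  rw [← pa.act_mul g⁻¹ _ _ (by simpa using pa.idem g) (by simpa using hx), hx]

end PartialAction

namespace IsPartialSkewGroupRing

variable {G R A : Type} [Group G] [Ring R] [Ring A] {pa : PartialAction G R} {δ : G → R → A}

theorem map_zero (hcp : IsPartialSkewGroupRing pa A δ) (g : G) : δ g 0 = 0 := by
  simpa using hcp.add g 0 0

def baseRingHom (hcp : IsPartialSkewGroupRing pa A δ) : R →+* A where
  toFun := δ 1
  map_one' := hcp.one
  map_mul' a b := by
    rw [hcp.mul 1 1 a b (by rw [pa.e_one, one_mul]) (by rw [pa.e_one, one_mul])]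
    simp [pa.act_one]
  map_zero' := hcp.map_zero 1
  map_add' := hcp.add 1

theorem eq_e_mul_baseRingHom (hcp : IsPartialSkewGroupRing pa A δ) {g : G} {a : R}
    (ha : pa.e g * a = a) :
    δ g a = δ g (pa.e g) * hcp.baseRingHom (pa.act g⁻¹ a) := by
  change _ = δ g (pa.e g) * δ 1 (pa.act g⁻¹ a)
  rw [hcp.mul g 1 _ _ (pa.idem g) (by rw [pa.e_one, one_mul]), mul_one,
    pa.act_inv_e_mul ha, pa.act_act_inv ha]

theorem exists_eq_sum_mul_baseRingHom (hcp : IsPartialSkewGroupRing pa A δ) (x : A) :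
    ∃ (s : Finset G) (c : G → R), x = ∑ g ∈ s, δ g (pa.e g) * hcp.baseRingHom (c g) := by
  obtain ⟨s, a, ha, rfl⟩ := hcp.span x
  exact ⟨s, fun g => pa.act g⁻¹ (a g),
    Finset.sum_congr rfl fun g _ => hcp.eq_e_mul_baseRingHom (ha g)⟩

end IsPartialSkewGroupRing

/-- Let `α` be a partial action of a finite group `G` on a
unital ring `R` (each domain generated by a central idempotent).  If `R` has
right Krull dimension, then the partial skew group ring `R*_α G` has right
Krull dimension and `Kdim(R*_α G) ≤ Kdim(R)`. -/
theorem partialSkewGroupRing_krullDim_le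
    {G R : Type} [Group G] [Finite G] [Ring R]
    (pa : PartialAction G R)
    (A : Type) [Ring A] (δ : G → R → A)
    (hcp : IsPartialSkewGroupRing pa A δ)
    (hR : HasRightKrullDim R) :
    HasRightKrullDim A ∧ RightKrullDimLE A R := by
  have hle : RightKrullDimLE A R := rightKrullDimLE_of_ringHom_of_fg hcp.baseRingHom
    (fun g => δ g (pa.e g)) hcp.exists_eq_sum_mul_baseRingHom
  obtain ⟨o, ho⟩ := hR
  exact ⟨⟨o, hle o ho⟩, hle⟩
end

section
/- Let α be a partial action of a group G on a unital ring R and H a subgroup of G. If R*_α G has right Krull dimension, then R*_{α_H} H has right Krull dimension and Kdim(R*_{α_H} H) ≤ Kdim(R*_α G). In particular, if R*_α G has right Krull dimension then R has right Krull dimension and Kdim(R) ≤ Kdim(R*_α G). -/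
/-!
Write `A = ⊕_{g ∈ G} D_g δ_g` and, for `S ⊆ G`, let `A_S` (`deltaSpan δ S`) be the additive
span of the `a δ_g` with `g ∈ S`. Then `A = A_H ⊕ A_{G∖H}`, the summand `A_H` is the subring
`R *_{α_H} H`, and `A_{G∖H}` is a left `A_H`-submodule because `H · (G∖H) ⊆ G∖H`.
Consequently `I A ∩ A_H = I` for every right ideal `I` of `A_H`, so `I ↦ I A` is an order
embedding of right ideal lattices, and deviation can only drop along order embeddings. The base
ring `R` is the case `H = 1`, embedded by `a ↦ a δ_1`.
-/

theorem DeviationLE.of_map_le_map_iff {o : Ordinal.{0}} {α β : Type} [Preorder α] [Preorder β]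
    (f : α → β) (hf : ∀ a b, f a ≤ f b ↔ a ≤ b) (hβ : DeviationLE o β) : DeviationLE o α := by
  induction o using WellFoundedLT.induction generalizing α β with
  | _ o IH =>
    rw [DeviationLE] at hβ ⊢
    intro u hu
    obtain ⟨N, hN⟩ := hβ (f ∘ u) fun n => (hf _ _).2 (hu n)
    refine ⟨N, fun n hn => (hN n hn).imp (hf _ _).1 ?_⟩
    rintro ⟨o', ho', hdev⟩
    refine ⟨o', ho', IH o' ho' (β := Set.Icc (f (u (n + 1))) (f (u n)))
      (fun x => ⟨f x, (hf _ _).2 x.2.1, (hf _ _).2 x.2.2⟩) (fun x y => hf x y) hdev⟩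

namespace Ideal

variable {S A : Type} [Ring S] [Ring A]

theorem exists_sub_mem_of_mem_map_op (f : S →+* A) {C : AddSubgroup A}
    (hfC : Codisjoint f.range.toAddSubgroup C) (hC : ∀ s, ∀ c ∈ C, f s * c ∈ C)
    {I : Ideal Sᵐᵒᵖ} {y : Aᵐᵒᵖ} (hy : y ∈ I.map (RingHom.op f)) :
    ∃ i ∈ I, y.unop - f i.unop ∈ C := by
  -- `C` is only a left submodule, so induct on the claim for every right multiple of `y`.
  suffices h : ∀ a : A, ∃ i ∈ I, y.unop * a - f i.unop ∈ C by simpa using h 1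
  induction hy using Submodule.span_induction with
  | mem y hy =>
    obtain ⟨i, hi, rfl⟩ := hy
    intro a
    obtain ⟨b, ⟨s, rfl⟩, c, hc, rfl⟩ :=
      AddSubgroup.mem_sup.1 (hfC.eq_top ▸ AddSubgroup.mem_top a)
    refine ⟨MulOpposite.op s * i, I.mul_mem_left _ hi, ?_⟩
    simpa [mul_add] using hC _ c hc
  | zero => exact fun _ => ⟨0, I.zero_mem, by simp⟩
  | add y z _ _ hy hz =>
    intro a
    obtain ⟨i, hi, hyi⟩ := hy a
    obtain ⟨j, hj, hzj⟩ := hz a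
    refine ⟨i + j, I.add_mem hi hj, ?_⟩
    convert C.add_mem hyi hzj using 1
    simp only [MulOpposite.unop_add, add_mul, map_add]
    abel
  | smul b y _ hy =>
    intro a
    simpa [mul_assoc] using hy (b.unop * a)

theorem comap_map_op_of_isCompl (f : S →+* A) (hf : Function.Injective f) {C : AddSubgroup A}
    (hfC : IsCompl f.range.toAddSubgroup C) (hC : ∀ s, ∀ c ∈ C, f s * c ∈ C)
    (I : Ideal Sᵐᵒᵖ) : (I.map (RingHom.op f)).comap (RingHom.op f) = I := by
  refine le_antisymm (fun x hx => ?_) Ideal.le_comap_map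
  obtain ⟨i, hi, hxi⟩ := exists_sub_mem_of_mem_map_op f hfC.codisjoint hC hx
  rw [RingHom.op_apply_apply, MulOpposite.unop_op, ← map_sub] at hxi
  have hxi0 : x.unop - i.unop = 0 :=
    (injective_iff_map_eq_zero f).1 hf _ (AddSubgroup.disjoint_def.1 hfC.disjoint ⟨_, rfl⟩ hxi)
  rwa [MulOpposite.unop_injective (sub_eq_zero.1 hxi0)]

end Ideal

theorem RightKrullDimLE.of_isCompl {S A : Type} [Ring S] [Ring A] (f : S →+* A)
    (hf : Function.Injective f) {C : AddSubgroup A} (hfC : IsCompl f.range.toAddSubgroup C)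
    (hC : ∀ s, ∀ c ∈ C, f s * c ∈ C) : RightKrullDimLE S A := fun _ ho =>
  ho.of_map_le_map_iff (fun I : Ideal Sᵐᵒᵖ => I.map (RingHom.op f)) fun I J => by
    rw [Ideal.map_le_iff_le_comap, Ideal.comap_map_op_of_isCompl f hf hfC hC]

theorem RightKrullDimLE.hasRightKrullDim {S A : Type} [Ring S] [Ring A]
    (h : RightKrullDimLE S A) (hA : HasRightKrullDim A) : HasRightKrullDim S :=
  let ⟨o, ho⟩ := hA
  ⟨o, h o ho⟩

section DeltaSpan

variable {G R A : Type} [AddGroup A]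

def deltaSpan (δ : G → R → A) (S : Set G) : AddSubgroup A :=
  AddSubgroup.closure {x | ∃ g ∈ S, ∃ a, x = δ g a}

theorem delta_mem_deltaSpan {δ : G → R → A} {S : Set G} {g : G} (hg : g ∈ S) (a : R) :
    δ g a ∈ deltaSpan δ S :=
  AddSubgroup.subset_closure ⟨g, hg, a, rfl⟩

end DeltaSpan

namespace IsPartialSkewGroupRing

variable {G R A : Type} [Group G] [Ring R] [Ring A] {pa : PartialAction G R} {δ : G → R → A}
  (hcp : IsPartialSkewGroupRing pa A δ)
include hcp

theorem delta_zero (g : G) : δ g 0 = 0 := (AddMonoidHom.mk' (δ g) (hcp.add g)).map_zero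

noncomputable def ofFinsupp : (G →₀ R) →+ A :=
  Finsupp.liftAddHom fun g => AddMonoidHom.mk' (δ g) (hcp.add g)

theorem ofFinsupp_single (g : G) (a : R) : hcp.ofFinsupp (Finsupp.single g a) = δ g a :=
  Finsupp.liftAddHom_apply_single _ g a

theorem ofFinsupp_apply (a : G →₀ R) : hcp.ofFinsupp a = ∑ g ∈ a.support, δ g (a g) :=
  Finsupp.liftAddHom_apply _ a

theorem ofFinsupp_eq_zero_iff (a : G →₀ R) :
    hcp.ofFinsupp a = 0 ↔ ∀ g, pa.e g * a g = 0 := by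
  rw [ofFinsupp_apply]
  constructor
  · intro h g
    have hsum : ∑ g ∈ a.support, δ g (pa.e g * a g) = 0 := by
      rw [← h]
      exact Finset.sum_congr rfl fun g _ => (hcp.proj g _).symm
    by_cases hg : g ∈ a.support
    · exact hcp.indep _ _ (fun g => by rw [← mul_assoc, pa.idem]) hsum g hg
    · rw [Finsupp.notMem_support_iff.1 hg, mul_zero]
  · intro h
    exact Finset.sum_eq_zero fun g _ => by rw [hcp.proj, h, hcp.delta_zero]

theorem exists_ofFinsupp_eq_of_mem_deltaSpan {S : Set G} {x : A} (hx : x ∈ deltaSpan δ S) :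
    ∃ a ∈ Finsupp.supported R ℤ S, hcp.ofFinsupp a = x := by
  have hle : deltaSpan δ S ≤ (Finsupp.supported R ℤ S).toAddSubgroup.map hcp.ofFinsupp :=
    (AddSubgroup.closure_le _).2 fun _ ⟨g, hg, a, hx⟩ =>
      ⟨Finsupp.single g a, Finsupp.single_mem_supported ℤ a hg,
        hx ▸ hcp.ofFinsupp_single g a⟩
  exact hle hx

theorem isCompl_deltaSpan_compl (S : Set G) :
    IsCompl (deltaSpan δ S) (deltaSpan δ Sᶜ) := by
  constructor
  · rw [AddSubgroup.disjoint_def]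
    intro x hx hx'
    obtain ⟨a, ha, rfl⟩ := hcp.exists_ofFinsupp_eq_of_mem_deltaSpan hx
    obtain ⟨b, hb, hab⟩ := hcp.exists_ofFinsupp_eq_of_mem_deltaSpan hx'
    have hd := (hcp.ofFinsupp_eq_zero_iff (b - a)).1 (by rw [map_sub, hab, sub_self])
    refine (hcp.ofFinsupp_eq_zero_iff a).2 fun g => ?_
    by_cases hg : g ∈ S
    · simpa [(Finsupp.mem_supported' _ _).1 hb g (not_not.2 hg)] using hd g
    · simp [(Finsupp.mem_supported' _ _).1 ha g hg]
  · rw [codisjoint_iff, eq_top_iff]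
    rintro x -
    obtain ⟨s, a, -, rfl⟩ := hcp.span x
    refine AddSubgroup.sum_mem _ fun g _ => ?_
    by_cases hg : g ∈ S
    · exact AddSubgroup.mem_sup_left (delta_mem_deltaSpan hg _)
    · exact AddSubgroup.mem_sup_right (delta_mem_deltaSpan hg _)

theorem delta_mul_delta (g h : G) (a b : R) :
    δ g a * δ h b = δ (g * h) (pa.act g (pa.act g⁻¹ (pa.e g * a) * (pa.e h * b))) := by
  rw [hcp.proj g a, hcp.proj h b]
  exact hcp.mul _ _ _ _ (by rw [← mul_assoc, pa.idem]) (by rw [← mul_assoc, pa.idem])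

theorem mul_mem_deltaSpan {S T U : Set G} (hU : ∀ g ∈ S, ∀ h ∈ T, g * h ∈ U) {x y : A}
    (hx : x ∈ deltaSpan δ S) (hy : y ∈ deltaSpan δ T) : x * y ∈ deltaSpan δ U := by
  induction hx using AddSubgroup.closure_induction with
  | mem x hx =>
    obtain ⟨g, hg, a, rfl⟩ := hx
    induction hy using AddSubgroup.closure_induction with
    | mem y hy =>
      obtain ⟨h, hh, b, rfl⟩ := hy
      rw [hcp.delta_mul_delta]
      exact delta_mem_deltaSpan (hU g hg h hh) _
    | zero => rw [mul_zero]; exact zero_mem _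
    | add _ _ _ _ hy hy' => simpa [mul_add] using add_mem hy hy'
    | neg _ _ hy => simpa [mul_neg] using neg_mem hy
  | zero => rw [zero_mul]; exact zero_mem _
  | add _ _ _ _ hx hx' => simpa [add_mul] using add_mem hx hx'
  | neg _ _ hx => simpa [neg_mul] using neg_mem hx

def deltaSpanSubring (H : Subgroup G) : Subring A :=
  { deltaSpan δ H with
    one_mem' := hcp.one ▸ delta_mem_deltaSpan H.one_mem 1
    mul_mem' := hcp.mul_mem_deltaSpan fun _ hg _ hh => H.mul_mem hg hh }

theorem closure_eq_deltaSpanSubring (H : Subgroup G) :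
    Subring.closure {x : A | ∃ h ∈ H, ∃ a : R, x = δ h a} = hcp.deltaSpanSubring H :=
  le_antisymm (Subring.closure_le.2 fun _ hx => AddSubgroup.subset_closure hx)
    fun _ hx => (AddSubgroup.closure_le (Subring.closure _).toAddSubgroup).2
      Subring.subset_closure hx

theorem rightKrullDimLE_deltaSpanSubring (H : Subgroup G) :
    RightKrullDimLE (hcp.deltaSpanSubring H) A := by
  refine RightKrullDimLE.of_isCompl (hcp.deltaSpanSubring H).subtype Subtype.val_injective
    (C := deltaSpan δ (H : Set G)ᶜ) ?_ fun b c hc => ?_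
  · rw [Subring.range_subtype]
    exact hcp.isCompl_deltaSpan_compl H
  · exact hcp.mul_mem_deltaSpan (T := (H : Set G)ᶜ) (U := (H : Set G)ᶜ)
      (fun g hg h hh hgh => hh ((H.mul_mem_cancel_left hg).1 hgh)) b.2 hc

def deltaOne : R →+* A where
  toFun := δ 1
  map_one' := hcp.one
  map_mul' a b := by
    simpa [pa.e_one, pa.act_one] using (hcp.delta_mul_delta 1 1 a b).symm
  map_zero' := hcp.delta_zero 1
  map_add' := hcp.add 1

theorem deltaOne_injective : Function.Injective hcp.deltaOne := by
  refine (injective_iff_map_eq_zero _).2 fun a ha => ?_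
  change δ 1 a = 0 at ha
  rw [← hcp.ofFinsupp_single] at ha
  simpa [pa.e_one] using (hcp.ofFinsupp_eq_zero_iff _).1 ha 1

theorem range_deltaOne : hcp.deltaOne.range.toAddSubgroup = deltaSpan δ {1} := by
  apply le_antisymm
  · rintro _ ⟨a, rfl⟩
    exact delta_mem_deltaSpan (Set.mem_singleton 1) a
  · rw [deltaSpan, AddSubgroup.closure_le]
    rintro _ ⟨g, hg, a, rfl⟩
    rw [Set.mem_singleton_iff.1 hg]
    exact ⟨a, rfl⟩

theorem rightKrullDimLE_base : RightKrullDimLE R A := by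
  refine RightKrullDimLE.of_isCompl hcp.deltaOne hcp.deltaOne_injective
    (C := deltaSpan δ {1}ᶜ) ?_ fun a c hc => ?_
  · rw [range_deltaOne]
    exact hcp.isCompl_deltaSpan_compl {1}
  · exact hcp.mul_mem_deltaSpan (S := {1})
      (fun g hg h hh => by rwa [Set.mem_singleton_iff.1 hg, one_mul])
      (delta_mem_deltaSpan (Set.mem_singleton 1) a) hc

end IsPartialSkewGroupRing

/-- Let `α` be a partial action of a group `G` on a unital
ring `R` and `H ≤ G`.  If `R*_α G` has right Krull dimension, then so does
`R*_{α_H} H` (the subring generated by the `δ h a`, `h ∈ H`) and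
`Kdim(R*_{α_H} H) ≤ Kdim(R*_α G)`.  In particular `R` has right Krull
dimension and `Kdim(R) ≤ Kdim(R*_α G)`. -/
theorem partialSkewGroupRing_subgroup_krullDim
    {G R : Type} [Group G] [Ring R]
    (pa : PartialAction G R)
    (A : Type) [Ring A] (δ : G → R → A)
    (hcp : IsPartialSkewGroupRing pa A δ) (H : Subgroup G)
    (hA : HasRightKrullDim A) :
    (HasRightKrullDim (Subring.closure {x : A | ∃ h ∈ H, ∃ a : R, x = δ h a}) ∧
      RightKrullDimLE (Subring.closure {x : A | ∃ h ∈ H, ∃ a : R, x = δ h a}) A) ∧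
    (HasRightKrullDim R ∧ RightKrullDimLE R A) := by
  have hB := hcp.rightKrullDimLE_deltaSpanSubring H
  have hR := hcp.rightKrullDimLE_base
  rw [hcp.closure_eq_deltaSpanSubring H]
  exact ⟨⟨hB.hasRightKrullDim hA, hB⟩, hR.hasRightKrullDim hA, hR⟩
end
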